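/- If A_1,…,A_t are complex complementary sequences of length v = dm (i.e., Σ_i PAF_{A_i}(s) = 0 for all s ≢ 0 mod v), then their m-compressions A_1^{(d)},…,A_t^{(d)} are complementary sequences of length d, i.e., Σ_i PAF_{A_i^{(d)}}(s) = 0 for all s ≢ 0 mod d. -/

import Mathlib

/-!
The compression `A^(d)` is `d`-periodic, so in the autocorrelation of `A^(d)` both factors can
be unfolded into sums over `A`, and the sum over one period of length `d` becomes a sum over a
full period of length `v = d m`. This gives `PAF_{A^(d)}(s) = ∑_{l < m} PAF_A(s + l d)`. When
`d ∤ s`, no shift `s + l d` is divisible by `v`, so after summing over the family every term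
vanishes.
-/

open Finset Function

section AddCommMonoid

variable {M : Type*} [AddCommMonoid M]

theorem Finset.sum_range_succ_eq_sum_range_of_eq {f : ℕ → M} {m : ℕ} (h : f m = f 0) :
    ∑ k ∈ range m, f (k + 1) = ∑ k ∈ range m, f k := by
  cases m with
  | zero => rfl
  | succ n => rw [sum_range_succ, sum_range_succ' f, h]

theorem Finset.sum_range_mul_eq_sum_sum (F : ℕ → M) (d m : ℕ) :
    ∑ J ∈ range (d * m), F J = ∑ j ∈ range d, ∑ k ∈ range m, F (j + k * d) := by
  induction m with
  | zero => simp
  | succ m ih =>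
    rw [Nat.mul_succ, sum_range_add, ih, ← sum_add_distrib]
    exact sum_congr rfl fun j _ ↦ by rw [sum_range_succ, add_comm (d * m), mul_comm d m]

def compression (d m : ℕ) (a : ℕ → M) (j : ℕ) : M :=
  ∑ k ∈ range m, a ((j + k * d) % (d * m))

theorem compression_periodic (d m : ℕ) (a : ℕ → M) : Periodic (compression d m a) d := by
  intro j
  have h := sum_range_succ_eq_sum_range_of_eq (f := fun k ↦ a ((j + k * d) % (d * m))) (m := m)
    (by simp only [mul_comm m d, Nat.add_mod_right, zero_mul, add_zero])
  simpa only [compression, add_mul, one_mul, ← add_assoc, add_right_comm j _ d] using h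

end AddCommMonoid

section Autocorrelation

variable {R : Type*} [NonUnitalNonAssocSemiring R]

def paf [Star R] (v : ℕ) (a : ℕ → R) (s : ℕ) : R :=
  ∑ j ∈ range v, a ((j + s) % v) * star (a (j % v))

theorem paf_compression [StarAddMonoid R] (d m : ℕ) (a : ℕ → R) (s : ℕ) :
    paf d (compression d m a) s = ∑ l ∈ range m, paf (d * m) a (s + l * d) := by
  have hper := compression_periodic d m a
  calc paf d (compression d m a) s
      = ∑ j ∈ range d, compression d m a (j + s) * star (compression d m a j) := by
        simp only [paf, hper.map_mod_nat]
    _ = ∑ j ∈ range d, ∑ k ∈ range m,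
          compression d m a (j + k * d + s) * star (a ((j + k * d) % (d * m))) := by
        refine sum_congr rfl fun j _ ↦ ?_
        rw [show compression d m a j = ∑ k ∈ range m, a ((j + k * d) % (d * m)) from rfl,
          star_sum, mul_sum]
        refine sum_congr rfl fun k _ ↦ ?_
        rw [add_right_comm j, ← hper.map_mod_nat (j + s + k * d), Nat.add_mul_mod_self_right,
          hper.map_mod_nat]
    _ = ∑ J ∈ range (d * m), compression d m a (J + s) * star (a (J % (d * m))) :=
        (sum_range_mul_eq_sum_sum (fun J ↦ compression d m a (J + s) * star (a (J % (d * m))))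
          d m).symm
    _ = ∑ l ∈ range m, paf (d * m) a (s + l * d) := by
        simp only [paf, compression, sum_mul, add_assoc]
        exact sum_comm

end Autocorrelation

theorem compression_of_complementary_general (d m t : ℕ)
    (v : ℕ) (hv : v = d * m) (A : Fin t → ℕ → ℂ)
    (hcomp : ∀ s : ℕ, s % v ≠ 0 →
      (∑ i, ∑ j ∈ Finset.range v, A i ((j + s) % v) * star (A i (j % v))) = 0)
    (Ad : Fin t → ℕ → ℂ)
    (hAd : ∀ i j, Ad i j = ∑ k ∈ Finset.range m, A i ((j + k * d) % v)) :
    ∀ s : ℕ, s % d ≠ 0 →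
      (∑ i, ∑ j ∈ Finset.range d, Ad i ((j + s) % d) * star (Ad i (j % d))) = 0 := by
  subst hv
  obtain rfl : Ad = fun i ↦ compression d m (A i) := funext fun i ↦ funext (hAd i)
  intro s hs
  have hshift (l : ℕ) : (s + l * d) % (d * m) ≠ 0 := by
    rw [Ne, ← Nat.dvd_iff_mod_eq_zero] at hs ⊢
    exact fun h ↦ hs <| (Nat.dvd_add_left (dvd_mul_left d l)).mp ((dvd_mul_right d m).trans h)
  change ∑ i, paf d (compression d m (A i)) s = 0
  rw [sum_congr rfl fun i _ ↦ paf_compression d m (A i) s, sum_comm]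
  exact sum_eq_zero fun l _ ↦ hcomp _ (hshift l)

/-- m-compressions of complementary complex sequences of length
v = dm are complementary sequences of length d. -/
theorem compression_of_complementary (d m t : ℕ) (hd : 0 < d) (hm : 0 < m)
    (v : ℕ) (hv : v = d * m) (A : Fin t → ℕ → ℂ)
    (hcomp : ∀ s : ℕ, s % v ≠ 0 →
      (∑ i, ∑ j ∈ Finset.range v, A i ((j + s) % v) * star (A i (j % v))) = 0)
    (Ad : Fin t → ℕ → ℂ)
    (hAd : ∀ i j, Ad i j = ∑ k ∈ Finset.range m, A i ((j + k * d) % v)) :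
    ∀ s : ℕ, s % d ≠ 0 →
      (∑ i, ∑ j ∈ Finset.range d, Ad i ((j + s) % d) * star (Ad i (j % d))) = 0 :=
  compression_of_complementary_general d m t v hv A hcomp Ad hAd
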